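/- Let E₀ = {(x,y) ∈ ℤ × ℤ : x + y is even} and E₁ = {(x,y) ∈ ℤ × ℤ : x + y is odd}. Then {E₀, E₁} is a defense-closed family of vertex covers of the infinite square grid T₄, and for every n ≥ 1 each of E₀ and E₁ meets {0,…,2n−1} × {0,…,2n−1} in exactly 2n² vertices. -/

import Mathlib

/-- A vertex cover of a simple graph: every edge has at least one endpoint in `C`. -/
def IsVertexCover {V : Type*} (G : SimpleGraph V) (C : Set V) : Prop :=
  ∀ ⦃u v : V⦄, G.Adj u v → u ∈ C ∨ v ∈ C

/-- The box `{0,…,w−1} × {0,…,h−1}` (w columns, h rows). -/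
def box (w h : ℕ) : Set (ℤ × ℤ) :=
  Set.Ico (0 : ℤ) (w : ℤ) ×ˢ Set.Ico (0 : ℤ) (h : ℤ)

/-- Subgraph of `G` induced on a set `s` of vertices (kept on the same vertex type). -/
def finGrid (G : SimpleGraph (ℤ × ℤ)) (w h : ℕ) : SimpleGraph (ℤ × ℤ) where
  Adj p q := G.Adj p q ∧ p ∈ box w h ∧ q ∈ box w h
  symm := ⟨fun p q hpq => ⟨hpq.1.symm, hpq.2.2, hpq.2.1⟩⟩
  loopless := ⟨fun p hp => G.loopless.irrefl p hp.1⟩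

/-- The infinite square grid: `(x,y)` and `(x',y')` adjacent iff `|x−x'| + |y−y'| = 1`. -/
def T4 : SimpleGraph (ℤ × ℤ) :=
  SimpleGraph.fromRel (fun p q => |p.1 - q.1| + |p.2 - q.2| = 1)

/-- A defense-closed family of vertex covers of `G`: every member is a vertex cover, and for
every member `S` and edge `{u,v}` with `u ∈ S`, `v ∉ S`, some member `S'` is obtained from `S`
by a bijection moving the guard on `u` to `v` and every other guard by at most one edge. -/
def IsDefenseClosedFamily {V : Type*} (G : SimpleGraph V) (F : Set (Set V)) : Prop :=
  (∀ S ∈ F, IsVertexCover G S) ∧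
  ∀ S ∈ F, ∀ u v : V, G.Adj u v → u ∈ S → v ∉ S →
    ∃ S' ∈ F, ∃ f : V → V, Set.BijOn f S S' ∧ f u = v ∧
      ∀ s ∈ S, f s = s ∨ G.Adj s (f s)

/-! Adjacent cells of the grid have coordinate sums of opposite parity, so each parity class
is a vertex cover. To move the guard on `u` to `v`, translate every guard by the edge vector
`v - u`: each guard moves to a neighbour, and since the coordinate sum of `v - u` is odd the
translation carries one parity class onto the other. In `{0,…,2n−1}²` the reflection
`x ↦ 2n − 1 − x` also swaps the two classes, so each has half of the `4n²` cells. -/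

theorem odd_add_of_abs_add_abs_eq_one {a b : ℤ} (h : |a| + |b| = 1) : Odd (a + b) := by
  have : Odd (|a| + |b|) := h ▸ odd_one
  rwa [Int.odd_add, odd_abs, even_abs, ← Int.odd_add] at this

theorem even_add_iff_odd {p d : ℤ × ℤ} (hd : Odd (d.1 + d.2)) :
    Even ((p + d).1 + (p + d).2) ↔ Odd (p.1 + p.2) := by
  rw [Prod.fst_add, Prod.snd_add, add_add_add_comm, Int.even_add', iff_true_right hd]

theorem odd_add_iff_even {p d : ℤ × ℤ} (hd : Odd (d.1 + d.2)) :
    Odd ((p + d).1 + (p + d).2) ↔ Even (p.1 + p.2) := by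
  rw [Prod.fst_add, Prod.snd_add, add_add_add_comm, Int.odd_add', iff_true_left hd]

theorem T4_adj_iff {p q : ℤ × ℤ} : T4.Adj p q ↔ |p.1 - q.1| + |p.2 - q.2| = 1 := by
  rw [T4, SimpleGraph.fromRel_adj, abs_sub_comm q.1, abs_sub_comm q.2, or_self]
  refine and_iff_right_of_imp fun h hpq => ?_
  subst hpq
  simp at h

theorem T4_adj_iff_abs_sub {u v : ℤ × ℤ} : T4.Adj u v ↔ |(v - u).1| + |(v - u).2| = 1 := by
  rw [T4_adj_iff, Prod.fst_sub, Prod.snd_sub, abs_sub_comm v.1, abs_sub_comm v.2]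

theorem T4_adj_add_sub_of_adj {u v : ℤ × ℤ} (huv : T4.Adj u v) (s : ℤ × ℤ) :
    T4.Adj s (s + (v - u)) := by
  rw [T4_adj_iff_abs_sub, add_sub_cancel_left]
  exact T4_adj_iff_abs_sub.1 huv

theorem odd_sub_of_T4_adj {u v : ℤ × ℤ} (huv : T4.Adj u v) : Odd ((v - u).1 + (v - u).2) :=
  odd_add_of_abs_add_abs_eq_one (T4_adj_iff_abs_sub.1 huv)

theorem isVertexCover_T4_even : IsVertexCover T4 {p | Even (p.1 + p.2)} := fun u v huv => by
  have h := even_add_iff_odd (p := u) (odd_sub_of_T4_adj huv)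
  rw [add_sub_cancel] at h
  simpa only [Set.mem_ofPred_eq, h] using Int.even_or_odd _

theorem isVertexCover_T4_odd : IsVertexCover T4 {p | Odd (p.1 + p.2)} := fun u v huv => by
  have h := odd_add_iff_even (p := u) (odd_sub_of_T4_adj huv)
  rw [add_sub_cancel] at h
  simpa only [Set.mem_ofPred_eq, h] using (Int.even_or_odd _).symm

theorem exists_T4_guard_move_of_translate {S S' : Set (ℤ × ℤ)} {u v : ℤ × ℤ} (huv : T4.Adj u v)
    (hS : ∀ p, p + (v - u) ∈ S' ↔ p ∈ S) :
    ∃ f : ℤ × ℤ → ℤ × ℤ, Set.BijOn f S S' ∧ f u = v ∧ ∀ s ∈ S, f s = s ∨ T4.Adj s (f s) :=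
  ⟨Equiv.addRight (v - u), (Equiv.addRight (v - u)).bijOn hS, add_sub_cancel u v,
    fun s _ => Or.inr (T4_adj_add_sub_of_adj huv s)⟩

theorem isDefenseClosedFamily_T4_parity :
    IsDefenseClosedFamily T4 {{p | Even (p.1 + p.2)}, {p | Odd (p.1 + p.2)}} := by
  refine ⟨?_, ?_⟩
  · rintro S (rfl | rfl)
    exacts [isVertexCover_T4_even, isVertexCover_T4_odd]
  · rintro S (rfl | rfl) u v huv - -
    · exact ⟨_, Or.inr rfl,
        exists_T4_guard_move_of_translate huv fun _ => odd_add_iff_even (odd_sub_of_T4_adj huv)⟩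
    · exact ⟨_, Or.inl rfl,
        exists_T4_guard_move_of_translate huv fun _ => even_add_iff_odd (odd_sub_of_T4_adj huv)⟩

theorem finite_box (w h : ℕ) : (box w h).Finite :=
  (Set.finite_Ico _ _).prod (Set.finite_Ico _ _)

theorem ncard_box (w h : ℕ) : (box w h).ncard = w * h := by
  simp [box, Set.ncard_prod, ← Finset.coe_Ico, Set.ncard_coe_finset]

theorem ncard_even_inter_box_eq_ncard_odd_inter_box {w : ℕ} (hw : Even w) (h : ℕ) :
    ({p : ℤ × ℤ | Even (p.1 + p.2)} ∩ box w h).ncard =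
      ({p : ℤ × ℤ | Odd (p.1 + p.2)} ∩ box w h).ncard := by
  refine Set.BijOn.ncard_eq
    ((Equiv.prodCongr (Equiv.subLeft ((w : ℤ) - 1)) (Equiv.refl ℤ)).bijOn fun p => ?_)
  obtain ⟨k, rfl⟩ := hw
  simp only [Set.mem_inter_iff, Set.mem_ofPred_eq, box, Set.mem_prod, Set.mem_Ico,
    Equiv.prodCongr_apply, Prod.map, Equiv.subLeft_apply, Equiv.refl_apply, Int.odd_iff,
    Int.even_iff]
  push_cast
  omega

theorem ncard_even_inter_box_add_ncard_odd_inter_box (w h : ℕ) :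
    ({p : ℤ × ℤ | Even (p.1 + p.2)} ∩ box w h).ncard +
      ({p : ℤ × ℤ | Odd (p.1 + p.2)} ∩ box w h).ncard = w * h := by
  rw [← ncard_box, ← Set.ncard_inter_add_ncard_sdiff_eq_ncard _ _ (finite_box w h),
    Set.inter_comm]
  congr 2
  ext p
  simp only [Set.mem_inter_iff, Set.mem_sdiff, Set.mem_ofPred_eq, Int.not_even_iff_odd, and_comm]

/-- `{E₀, E₁}` (even/odd coordinate sum) is a defense-closed family of vertex covers of the
infinite square grid, and each member meets `{0,…,2n−1}²` in exactly `2n²` vertices. -/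
theorem stmt_6 :
    IsDefenseClosedFamily T4
      {{p : ℤ × ℤ | Even (p.1 + p.2)}, {p : ℤ × ℤ | Odd (p.1 + p.2)}} ∧
    ∀ n : ℕ, 1 ≤ n →
      ({p : ℤ × ℤ | Even (p.1 + p.2)} ∩ box (2 * n) (2 * n)).ncard = 2 * n ^ 2 ∧
      ({p : ℤ × ℤ | Odd (p.1 + p.2)} ∩ box (2 * n) (2 * n)).ncard = 2 * n ^ 2 := by
  refine ⟨isDefenseClosedFamily_T4_parity, fun n _ => ?_⟩
  have hsum := ncard_even_inter_box_add_ncard_odd_inter_box (2 * n) (2 * n)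
  rw [ncard_even_inter_box_eq_ncard_odd_inter_box (even_two_mul n)] at hsum ⊢
  constructor <;> linarith
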